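/- Let κ : Λ²V → 𝔤 be a bilinear alternating map, where V = 𝔤/𝔭 carries a grading V = V_{-k}⊕⋯⊕V_{-1} and 𝔤 carries a compatible filtration 𝔤^j with one-parameter groups a^t acting diagonally with a^t·v = e^{tλ_i}v on V_i and eigenvalue e^{tμ} on the weight-μ part of 𝔤. Suppose for each pair (i,j) with i,j < 0 and each weight ν of weight-level l > i+j there is a sequence (a_k) of such diagonal elements with (a_k·κ)(v,w) bounded while the relevant eigenvalue ratio e^{(α+β−ν)(X_k)} → 0; then the component of κ(v,w) in weight level l vanishes. If moreover κ satisfies the regularity condition κ(𝔤^i,𝔤^j) ⊆ 𝔤^{i+j+1} for i,j < 0, then κ = 0. -/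

import Mathlib

/-!
Look at a component `π ν (κ v w)` of level above `Lg α + Lg β`. The contracting sequence `X k`
multiplies it by `exp ((ν - α - β) (X k)) → ∞`, while the projection `π ν`, being continuous, keeps
the acted curvature bounded; so the component is zero. Regularity places `κ v w` in the weight
spaces of level above `Lg α + Lg β`, all of whose components have just been shown to vanish, hence
`κ v w = 0` on graded pieces, and these span `V`.
-/

open Filter Bornology Set

theorem eq_zero_of_isBounded_range_smul {ι E : Type*} [NormedAddCommGroup E] [NormedSpace ℝ E]
    {l : Filter ι} [l.NeBot] {c : ι → ℝ} {y : E} (hc : Tendsto c l atTop)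
    (hb : IsBounded (range fun i => c i • y)) : y = 0 := by
  by_contra hy
  obtain ⟨C, hC⟩ := isBounded_iff_forall_norm_le.mp hb
  obtain ⟨i, hi⟩ := ((hc.atTop_mul_const (norm_pos_iff.mpr hy)).eventually_gt_atTop C).exists
  have hle : |c i| * ‖y‖ ≤ C := by simpa only [norm_smul, Real.norm_eq_abs] using hC _ ⟨i, rfl⟩
  nlinarith [le_abs_self (c i), norm_nonneg y]

theorem LinearMap.eq_zero_of_forall_mem_iSup {R M N ι : Type*} [Semiring R] [AddCommMonoid M]
    [Module R M] [AddCommMonoid N] [Module R N] {f : M →ₗ[R] N} {p : ι → Submodule R M}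
    {s : Set ι} (hp : ⨆ i ∈ s, p i = ⊤) (h : ∀ i ∈ s, ∀ x ∈ p i, f x = 0) : f = 0 := by
  rw [← LinearMap.ker_eq_top, eq_top_iff, ← hp]
  exact iSup₂_le fun i hi x hx => h i hi x hx

theorem LinearMap.eq_zero_of_forall_mem_iSup₂ {R M N ι : Type*} [CommSemiring R]
    [AddCommMonoid M] [Module R M] [AddCommMonoid N] [Module R N] {f : M →ₗ[R] M →ₗ[R] N}
    {p : ι → Submodule R M} {s : Set ι} (hp : ⨆ i ∈ s, p i = ⊤)
    (h : ∀ i ∈ s, ∀ j ∈ s, ∀ x ∈ p i, ∀ y ∈ p j, f x y = 0) : f = 0 :=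
  eq_zero_of_forall_mem_iSup hp fun i hi x hx =>
    eq_zero_of_forall_mem_iSup hp fun j hj y hy => h i hi j hj x hx y hy

section Projections

variable {R M ι : Type*} [Semiring R] [AddCommMonoid M] [Module R M]
  {s : Finset ι} {π : ι → M →ₗ[R] M}

theorem apply_sum_smul_eq_of_orthogonal (hidem : ∀ i ∈ s, ∀ x, π i (π i x) = π i x)
    (horth : ∀ i ∈ s, ∀ j ∈ s, i ≠ j → ∀ x, π i (π j x) = 0) {i : ι} (hi : i ∈ s)
    (c : ι → R) (x : M) : π i (∑ j ∈ s, c j • π j x) = c i • π i x := by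
  rw [map_sum, Finset.sum_eq_single_of_mem i hi, map_smul, hidem i hi]
  intro j hj hji
  rw [map_smul, horth i hi j hj hji.symm, smul_zero]

theorem iSup_range_le_ker_of_orthogonal
    (horth : ∀ i ∈ s, ∀ j ∈ s, i ≠ j → ∀ x, π i (π j x) = 0) {t : Finset ι} (ht : t ⊆ s)
    {i : ι} (hi : i ∈ s) (hit : i ∉ t) :
    ⨆ j ∈ t, LinearMap.range (π j) ≤ LinearMap.ker (π i) := by
  refine iSup₂_le fun j hj => ?_
  rintro _ ⟨x, rfl⟩
  exact horth i hi j (ht hj) (ne_of_mem_of_not_mem hj hit).symm x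

theorem eq_zero_of_mem_iSup_range_of_orthogonal (hsum : ∀ x, ∑ i ∈ s, π i x = x)
    (horth : ∀ i ∈ s, ∀ j ∈ s, i ≠ j → ∀ x, π i (π j x) = 0) {t : Finset ι} (ht : t ⊆ s)
    {x : M} (hx : x ∈ ⨆ j ∈ t, LinearMap.range (π j)) (h : ∀ i ∈ t, π i x = 0) : x = 0 := by
  rw [← hsum x]
  refine Finset.sum_eq_zero fun i hi => ?_
  by_cases hit : i ∈ t
  · exact h i hit
  · exact iSup_range_le_ker_of_orthogonal horth ht hi hit hx

end Projections

theorem proj_eq_zero_of_isBounded_range_sum_exp_smul {ι E : Type*} [NormedAddCommGroup E]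
    [NormedSpace ℝ E] [FiniteDimensional ℝ E] {s : Finset ι} {π : ι → E →ₗ[ℝ] E}
    (hidem : ∀ i ∈ s, ∀ x, π i (π i x) = π i x)
    (horth : ∀ i ∈ s, ∀ j ∈ s, i ≠ j → ∀ x, π i (π j x) = 0) {ν : ι} (hν : ν ∈ s) {x : E}
    (w : ℕ → ι → ℝ) (hb : IsBounded (range fun k => ∑ μ ∈ s, Real.exp (w k μ) • π μ x))
    (hw : Tendsto (fun k => w k ν) atTop atTop) : π ν x = 0 := by
  refine eq_zero_of_isBounded_range_smul (Real.tendsto_exp_atTop.comp hw) ?_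
  have hbν := (LinearMap.toContinuousLinearMap (π ν)).lipschitz.isBounded_image hb
  rw [← range_comp] at hbν
  simpa only [Function.comp_def, LinearMap.coe_toContinuousLinearMap',
    apply_sum_smul_eq_of_orthogonal hidem horth hν] using hbν

theorem curvature_vanishing_by_contraction_general
    {𝔞 V 𝔤 : Type*} [AddCommGroup 𝔞] [Module ℝ 𝔞]
    [AddCommGroup V] [Module ℝ V]
    [NormedAddCommGroup 𝔤] [NormedSpace ℝ 𝔤] [FiniteDimensional ℝ 𝔤]
    (Wg : Finset (Module.Dual ℝ 𝔞)) (Lg : Module.Dual ℝ 𝔞 → ℤ)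
    (π : Module.Dual ℝ 𝔞 → 𝔤 →ₗ[ℝ] 𝔤)
    (hπ_sum : ∀ x : 𝔤, ∑ μ ∈ Wg, π μ x = x)
    (hπ_idem : ∀ μ ∈ Wg, ∀ x : 𝔤, π μ (π μ x) = π μ x)
    (hπ_orth : ∀ μ ∈ Wg, ∀ μ' ∈ Wg, μ ≠ μ' → ∀ x : 𝔤, π μ (π μ' x) = 0)
    (Wv : Finset (Module.Dual ℝ 𝔞)) (VS : Module.Dual ℝ 𝔞 → Submodule ℝ V)
    (hVspan : (⨆ α ∈ Wv, VS α) = ⊤)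
    (κ : V →ₗ[ℝ] V →ₗ[ℝ] 𝔤)
    (hseq : ∀ α ∈ Wv, ∀ β ∈ Wv, ∀ ν ∈ Wg, Lg α + Lg β < Lg ν →
      ∀ v ∈ VS α, ∀ w ∈ VS β, ∃ X : ℕ → 𝔞,
        IsBounded (Set.range fun k =>
          ∑ μ ∈ Wg, Real.exp (μ (X k) - (α (X k) + β (X k))) • π μ (κ v w)) ∧
        Tendsto (fun k => α (X k) + β (X k) - ν (X k)) atTop atBot)
    (hreg : ∀ α ∈ Wv, ∀ β ∈ Wv, ∀ v ∈ VS α, ∀ w ∈ VS β,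
      κ v w ∈ ⨆ μ ∈ Wg.filter (fun μ => Lg α + Lg β + 1 ≤ Lg μ), LinearMap.range (π μ)) :
    (∀ α ∈ Wv, ∀ β ∈ Wv, ∀ ν ∈ Wg, Lg α + Lg β < Lg ν →
      ∀ v ∈ VS α, ∀ w ∈ VS β, π ν (κ v w) = 0) ∧
    κ = 0 := by
  have hcomp : ∀ α ∈ Wv, ∀ β ∈ Wv, ∀ ν ∈ Wg, Lg α + Lg β < Lg ν →
      ∀ v ∈ VS α, ∀ w ∈ VS β, π ν (κ v w) = 0 := by
    intro α hα β hβ ν hν hlt v hv w hw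
    obtain ⟨X, hbdd, htend⟩ := hseq α hα β hβ ν hν hlt v hv w hw
    refine proj_eq_zero_of_isBounded_range_sum_exp_smul hπ_idem hπ_orth hν
      (fun k μ => μ (X k) - (α (X k) + β (X k))) hbdd ?_
    simpa only [Function.comp_def, neg_sub] using tendsto_neg_atBot_atTop.comp htend
  refine ⟨hcomp, LinearMap.eq_zero_of_forall_mem_iSup₂ hVspan fun α hα β hβ v hv w hw => ?_⟩
  refine eq_zero_of_mem_iSup_range_of_orthogonal hπ_sum hπ_orth (Finset.filter_subset _ _)
    (hreg α hα β hβ v hv w hw) fun μ hμ => ?_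
  rw [Finset.mem_filter] at hμ
  exact hcomp α hα β hβ μ hμ.1 (by omega) v hv w hw

/-- Abstract curvature-vanishing argument.  `κ : Λ²V → 𝔤` is an alternating
bilinear map, `V` graded by weights `α ∈ Wv` of negative level, `𝔤` decomposed by weights
`μ ∈ Wg` with projections `π μ` and level function `Lg`.  If for each `v, w` in graded
pieces of weights `α, β` and each 𝔤-weight `ν` of level `> Lg α + Lg β` there is a sequence
`X k` in the split torus's Lie algebra `𝔞` with the acted curvature
`∑_μ e^{(μ−α−β)(X k)} • π μ (κ v w)` bounded while `(α+β−ν)(X k) → −∞`, then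
`π ν (κ v w) = 0`; if moreover `κ` is regular, i.e. `κ(𝔤^i,𝔤^j) ⊆ 𝔤^{i+j+1}` on negative
pieces, then `κ = 0`. -/
theorem curvature_vanishing_by_contraction
    {𝔞 V 𝔤 : Type*} [AddCommGroup 𝔞] [Module ℝ 𝔞]
    [AddCommGroup V] [Module ℝ V]
    [NormedAddCommGroup 𝔤] [NormedSpace ℝ 𝔤] [FiniteDimensional ℝ 𝔤]
    (Wg : Finset (Module.Dual ℝ 𝔞)) (Lg : Module.Dual ℝ 𝔞 → ℤ)
    (π : Module.Dual ℝ 𝔞 → 𝔤 →ₗ[ℝ] 𝔤)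
    (hπ_sum : ∀ x : 𝔤, ∑ μ ∈ Wg, π μ x = x)
    (hπ_idem : ∀ μ ∈ Wg, ∀ x : 𝔤, π μ (π μ x) = π μ x)
    (hπ_orth : ∀ μ ∈ Wg, ∀ μ' ∈ Wg, μ ≠ μ' → ∀ x : 𝔤, π μ (π μ' x) = 0)
    (Wv : Finset (Module.Dual ℝ 𝔞)) (VS : Module.Dual ℝ 𝔞 → Submodule ℝ V)
    (hneg : ∀ α ∈ Wv, Lg α < 0)
    (hVspan : (⨆ α ∈ Wv, VS α) = ⊤)
    (κ : V →ₗ[ℝ] V →ₗ[ℝ] 𝔤)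
    (halt : ∀ v w : V, κ v w = - κ w v)
    (hseq : ∀ α ∈ Wv, ∀ β ∈ Wv, ∀ ν ∈ Wg, Lg α + Lg β < Lg ν →
      ∀ v ∈ VS α, ∀ w ∈ VS β, ∃ X : ℕ → 𝔞,
        IsBounded (Set.range fun k =>
          ∑ μ ∈ Wg, Real.exp (μ (X k) - (α (X k) + β (X k))) • π μ (κ v w)) ∧
        Tendsto (fun k => α (X k) + β (X k) - ν (X k)) atTop atBot)
    (hreg : ∀ α ∈ Wv, ∀ β ∈ Wv, ∀ v ∈ VS α, ∀ w ∈ VS β,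
      κ v w ∈ ⨆ μ ∈ Wg.filter (fun μ => Lg α + Lg β + 1 ≤ Lg μ), LinearMap.range (π μ)) :
    (∀ α ∈ Wv, ∀ β ∈ Wv, ∀ ν ∈ Wg, Lg α + Lg β < Lg ν →
      ∀ v ∈ VS α, ∀ w ∈ VS β, π ν (κ v w) = 0) ∧
    κ = 0 :=
  curvature_vanishing_by_contraction_general Wg Lg π hπ_sum hπ_idem hπ_orth Wv VS hVspan κ hseq hreg
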